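/- Let ψ be a Hochschild 2n-cocycle of an algebra B with values in B^* (with the convention ψ(a_0,...,a_p) = 0 for p ≠ 2n). For a commutative DG algebra Ω (de Rham forms) and the DGA A = Ω ⊗ B with differential d ⊗ 1, the evaluation map sending (ω_0 a_0, ..., ω_p a_p) to ψ(a_0,...,a_p) ω_0 ∧ ω_1 ∧ ⋯ ∧ ω_p defines a map of complexes from the (product-completed) Hochschild chain complex C^Π_•(A) to Ω^{2n−•} with differential (−1)^p d on Ω^{2n−p}. -/

import Mathlib

/-!
Every inner face of a generator `(ω_0a_0,…,ω_pa_p)` multiplies out to the same form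
`ω_0⋯ω_p`, and so does the cyclic last face once `ω_p` is moved back past `ω_0⋯ω_{p-1}`; the
Koszul sign this costs is exactly the one in the Hochschild boundary. Hence the terms of the
boundary that multiply neighbours evaluate to `(δψ)(a)·ω_0⋯ω_p`, which vanishes because `ψ` is a
cocycle. The terms in which `d` hits one `ω_i` add up to `(−1)^p d(ω_0⋯ω_p)` by the graded
Leibniz rule.
-/

noncomputable section

open scoped BigOperators DirectSum

/-- Evaluation of the cochain family `Ψ` on a generator `(ω_0a_0,…,ω_ka_k)`:
`Ψ_k(a)·ω_0⋯ω_k`. -/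
def evalChain {Ω B : Type*} [Ring Ω] [Algebra ℂ Ω] [Ring B]
    (Ψ : (k : ℕ) → (Fin (k + 1) → B) → ℂ) (k : ℕ)
    (w : Fin (k + 1) → Ω) (a : Fin (k + 1) → B) : Ω :=
  Ψ k a • (List.ofFn w).prod

namespace Fin

variable {M : Type*} {m : ℕ}

def hochschildFace [Mul M] (f : Fin (m + 2) → M) (i : Fin (m + 1)) : Fin (m + 1) → M :=
  fun j => if (j : ℕ) < (i : ℕ) then f j.castSucc
    else if (j : ℕ) = (i : ℕ) then f i.castSucc * f i.succ
    else f j.succ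

def hochschildLastFace [Mul M] (f : Fin (m + 2) → M) : Fin (m + 1) → M :=
  fun j => if (j : ℕ) = 0 then f (last (m + 1)) * f 0 else f j.castSucc

section Mul

variable [Mul M]

theorem hochschildFace_zero (f : Fin (m + 2) → M) :
    hochschildFace f 0 = cons (f 0 * f 1) (fun j => f j.succ.succ) := by
  funext j
  cases j using Fin.cases
  · simp [hochschildFace]
  · rfl

theorem hochschildFace_succ (f : Fin (m + 3) → M) (i : Fin (m + 1)) :
    hochschildFace f i.succ = cons (f 0) (hochschildFace (tail f) i) := by
  funext j
  cases j using Fin.cases <;> simp [hochschildFace, tail]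

theorem hochschildLastFace_eq_cons (f : Fin (m + 2) → M) :
    hochschildLastFace f = cons (f (last _) * f 0) (fun j => f j.succ.castSucc) := by
  funext j
  cases j using Fin.cases
  · simp [hochschildLastFace]
  · rfl

end Mul

variable [Monoid M]

theorem prod_ofFn_hochschildFace (f : Fin (m + 2) → M) (i : Fin (m + 1)) :
    (List.ofFn (hochschildFace f i)).prod = (List.ofFn f).prod := by
  induction m with
  | zero =>
    obtain rfl := Fin.fin_one_eq_zero i
    simp [hochschildFace_zero, List.ofFn_succ]
  | succ m ih =>
    cases i using Fin.cases with
    | zero => simp [hochschildFace_zero, List.ofFn_succ, mul_assoc]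
    | succ i =>
      rw [hochschildFace_succ, List.ofFn_cons, List.prod_cons, ih, List.ofFn_succ (f := f),
        List.prod_cons]
      rfl

theorem prod_ofFn_hochschildLastFace (f : Fin (m + 2) → M) :
    (List.ofFn (hochschildLastFace f)).prod
      = f (last _) * (List.ofFn fun j => f j.castSucc).prod := by
  simp [hochschildLastFace_eq_cons, List.ofFn_succ, mul_assoc]

end Fin

/-- Writing a cochain `ψ ∈ C^q(B, B^*)` as `φ(a_0,…,a_q) = ψ(a_1,…,a_q)(a_0)`, this is
`(δψ)(b_1,…,b_{q+1})(b_0)`; the last face comes from the bimodule structure of `B^*`. -/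
def hochschildCoboundary {R B : Type*} [CommRing R] [Mul B] {q : ℕ}
    (φ : (Fin (q + 1) → B) → R) (b : Fin (q + 2) → B) : R :=
  (∑ i : Fin (q + 1), (-1 : R) ^ (i : ℕ) * φ (Fin.hochschildFace b i)) +
    (-1 : R) ^ (q + 1) * φ (Fin.hochschildLastFace b)

theorem Fin.sum_filter_lt_succ {M : Type*} [AddCommMonoid M] {m : ℕ} (e : Fin (m + 1) → M)
    (k : Fin m) :
    ∑ j ∈ Finset.univ.filter (· < k.succ), e j
      = e 0 + ∑ j ∈ Finset.univ.filter (· < k), e j.succ := by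
  simp [Finset.sum_filter, Fin.sum_univ_succ, Fin.succ_lt_succ_iff, Fin.succ_pos]

section GradedLeibniz

variable {R Ω : Type*} [CommRing R] [Ring Ω] [Algebra R Ω] {𝒜 : ℕ → Submodule R Ω}
  [SetLike.GradedMonoid 𝒜] {d : Ω →ₗ[R] Ω}

theorem map_list_prod_ofFn_of_leibniz
    (hLeib : ∀ (i : ℕ) (w v : Ω), w ∈ 𝒜 i → d (w * v) = d w * v + ((-1 : R) ^ i) • (w * d v))
    {m : ℕ} (e : Fin m → ℕ) (w : Fin m → Ω) (hw : ∀ j, w j ∈ 𝒜 (e j)) :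
    d (List.ofFn w).prod
      = ∑ i : Fin m, ((-1 : R) ^ (∑ j ∈ Finset.univ.filter (· < i), e j)) •
          (List.ofFn (Function.update w i (d (w i)))).prod := by
  induction m with
  | zero => simpa using hLeib 0 1 1 SetLike.GradedOne.one_mem
  | succ m ih =>
    rw [List.ofFn_succ, List.prod_cons, hLeib _ _ _ (hw 0),
      ih (fun j => e j.succ) (fun j => w j.succ) (fun j => hw j.succ), Fin.sum_univ_succ]
    congr 1
    · simp [List.ofFn_succ]
    · rw [Finset.mul_sum, Finset.smul_sum]
      refine Finset.sum_congr rfl fun k _ => ?_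
      have htail : (fun j => Function.update w k.succ (d (w k.succ)) j.succ)
          = Function.update (fun j => w j.succ) k (d (w k.succ)) :=
        Fin.tail_update_succ w k _
      rw [Fin.sum_filter_lt_succ, pow_add, mul_smul, mul_smul_comm, List.ofFn_succ,
        List.prod_cons, htail, Function.update_of_ne (Fin.succ_ne_zero k).symm]

end GradedLeibniz

section EvalChain

variable {Ω B : Type*} [Ring Ω] [Algebra ℂ Ω] {𝒜 : ℕ → Submodule ℂ Ω} [SetLike.GradedMonoid 𝒜]
  [Ring B] (Ψ : (k : ℕ) → (Fin (k + 1) → B) → ℂ)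

theorem map_evalChain_of_leibniz {d : Ω →ₗ[ℂ] Ω}
    (hLeib : ∀ (i : ℕ) (w v : Ω), w ∈ 𝒜 i → d (w * v) = d w * v + ((-1 : ℂ) ^ i) • (w * d v))
    {k : ℕ} (e : Fin (k + 1) → ℕ) (w : Fin (k + 1) → Ω) (hw : ∀ j, w j ∈ 𝒜 (e j))
    (a : Fin (k + 1) → B) :
    d (evalChain Ψ k w a)
      = ∑ i, ((-1 : ℂ) ^ (∑ j ∈ Finset.univ.filter (· < i), e j)) •
          evalChain Ψ k (Function.update w i (d (w i))) a := by
  simp only [evalChain, map_smul, map_list_prod_ofFn_of_leibniz hLeib e w hw, Finset.smul_sum,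
    smul_comm (Ψ k a)]

theorem sum_evalChain_hochschildFaces_eq_coboundary_smul
    (hgc : ∀ (i j : ℕ) (w v : Ω), w ∈ 𝒜 i → v ∈ 𝒜 j → w * v = ((-1 : ℂ) ^ (i * j)) • (v * w))
    {q : ℕ} (e : Fin (q + 2) → ℕ) (w : Fin (q + 2) → Ω) (hw : ∀ j, w j ∈ 𝒜 (e j))
    (a : Fin (q + 2) → B) :
    (∑ i : Fin (q + 1), (-1 : ℂ) ^ (i : ℕ) •
        evalChain Ψ q (Fin.hochschildFace w i) (Fin.hochschildFace a i)) +
      ((-1 : ℂ) ^ ((q + 1) + e (Fin.last (q + 1)) * ∑ j : Fin (q + 1), e j.castSucc)) •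
        evalChain Ψ q (Fin.hochschildLastFace w) (Fin.hochschildLastFace a)
      = hochschildCoboundary (Ψ q) a • (List.ofFn w).prod := by
  set s := e (Fin.last (q + 1)) * ∑ j : Fin (q + 1), e j.castSucc
  have hfront : (List.ofFn fun j : Fin (q + 1) => w j.castSucc).prod
      ∈ 𝒜 (∑ j : Fin (q + 1), e j.castSucc) := by
    rw [← List.sum_ofFn]
    exact SetLike.list_prod_ofFn_mem_graded _ _ fun j => hw j.castSucc
  have hrotate : w (Fin.last (q + 1)) * (List.ofFn fun j : Fin (q + 1) => w j.castSucc).prod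
      = (-1 : ℂ) ^ s • (List.ofFn w).prod := by
    rw [hgc _ _ _ _ (hw _) hfront, List.ofFn_succ' w, List.prod_concat]
  have hsign : (-1 : ℂ) ^ s * (-1) ^ s = 1 := by
    rw [← pow_add, ← two_mul, pow_mul, neg_one_sq, one_pow]
  simp only [evalChain, Fin.prod_ofFn_hochschildFace, Fin.prod_ofFn_hochschildLastFace, hrotate,
    smul_smul, ← Finset.sum_smul, ← add_smul, hochschildCoboundary]
  congr 2
  linear_combination (-1 : ℂ) ^ (q + 1) * Ψ q (Fin.hochschildLastFace a) * hsign

end EvalChain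

theorem statement15
    (Ω : Type*) [Ring Ω] [Algebra ℂ Ω] (𝒜 : ℕ → Submodule ℂ Ω) [GradedAlgebra 𝒜]
    -- Ω is graded-commutative
    (hgc : ∀ (i j : ℕ) (w v : Ω), w ∈ 𝒜 i → v ∈ 𝒜 j →
      w * v = ((-1 : ℂ) ^ (i * j)) • (v * w))
    -- the de Rham differential of Ω
    (dΩ : Ω →ₗ[ℂ] Ω)
    (hLeib : ∀ (i : ℕ) (w v : Ω), w ∈ 𝒜 i →
      dΩ (w * v) = dΩ w * v + ((-1 : ℂ) ^ i) • (w * dΩ v))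
    (B : Type*) [Ring B] (n : ℕ)
    -- the Hochschild cocycle ψ = Ψ (2n), with the convention Ψ k = 0 for k ≠ 2n
    (Ψ : (k : ℕ) → (Fin (k + 1) → B) → ℂ)
    (hvan : ∀ k, k ≠ 2 * n → ∀ a, Ψ k a = 0)
    (hcoc : ∀ (b : Fin (2 * n + 2) → B),
      (∑ i : Fin (2 * n + 1), (-1 : ℂ) ^ (i : ℕ) *
        Ψ (2 * n) (fun j =>
          if (j : ℕ) < (i : ℕ) then b ⟨(j : ℕ), by have := j.isLt; omega⟩
          else if (j : ℕ) = (i : ℕ) then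
            b ⟨(i : ℕ), by have := i.isLt; omega⟩ *
              b ⟨(i : ℕ) + 1, by have := i.isLt; omega⟩
          else b ⟨(j : ℕ) + 1, by have := j.isLt; omega⟩)) +
      (-1 : ℂ) ^ (2 * n + 1) *
        Ψ (2 * n) (fun j =>
          if (j : ℕ) = 0 then b (Fin.last (2 * n + 1)) * b 0
          else b ⟨(j : ℕ), by have := j.isLt; omega⟩) = 0) :
    -- the chain map property on a homogeneous generator (ω_0a_0,…,ω_{q+1}a_{q+1}):
    ∀ (q : ℕ) (e : Fin (q + 2) → ℕ) (w : Fin (q + 2) → Ω)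
      (_ : ∀ j, w j ∈ 𝒜 (e j)) (a : Fin (q + 2) → B),
      -- evaluation of the Hochschild boundary of the generator …
      ((∑ i : Fin (q + 1), (-1 : ℂ) ^ (i : ℕ) •
          evalChain Ψ q
            (fun j => if (j : ℕ) < (i : ℕ) then w ⟨(j : ℕ), by have := j.isLt; omega⟩
              else if (j : ℕ) = (i : ℕ) then w i.castSucc * w i.succ
              else w ⟨(j : ℕ) + 1, by have := j.isLt; omega⟩)
            (fun j => if (j : ℕ) < (i : ℕ) then a ⟨(j : ℕ), by have := j.isLt; omega⟩
              else if (j : ℕ) = (i : ℕ) then a i.castSucc * a i.succ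
              else a ⟨(j : ℕ) + 1, by have := j.isLt; omega⟩)) +
        ((-1 : ℂ) ^ ((q + 1) +
            (e (Fin.last (q + 1))) * (∑ j : Fin (q + 1), e j.castSucc))) •
          evalChain Ψ q
            (fun j => if (j : ℕ) = 0 then w (Fin.last (q + 1)) * w 0
              else w ⟨(j : ℕ), by have := j.isLt; omega⟩)
            (fun j => if (j : ℕ) = 0 then a (Fin.last (q + 1)) * a 0
              else a ⟨(j : ℕ), by have := j.isLt; omega⟩) +
        ∑ i : Fin (q + 2),
          ((-1 : ℂ) ^ ((q + 1) +
              ∑ j ∈ Finset.univ.filter (fun j : Fin (q + 2) => j < i), e j)) •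
            evalChain Ψ (q + 1) (Function.update w i (dΩ (w i))) a)
      -- … equals `(−1)^{q+1} d` of the evaluation of the generator
      = (-1 : ℂ) ^ (q + 1) • dΩ (evalChain Ψ (q + 1) w a) := by
  intro q e w hw a
  have hδ : hochschildCoboundary (Ψ q) a = 0 := by
    by_cases hq : q = 2 * n
    · subst hq
      exact hcoc a
    · simp [hochschildCoboundary, hvan q hq]
  have hfaces := sum_evalChain_hochschildFaces_eq_coboundary_smul Ψ hgc e w hw a
  rw [hδ, zero_smul] at hfaces
  -- the faces written out in the statement are `Fin.hochschildFace`, `Fin.hochschildLastFace`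
  refine (congrArg (· + _) hfaces).trans ?_
  rw [zero_add, map_evalChain_of_leibniz Ψ hLeib e w hw, Finset.smul_sum]
  simp only [pow_add, mul_smul]

end
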